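/- Let V : ℝ → ℝ be continuous and even. For r > 0 define F(r) = ∫₀^{π/2} V(r cos θ) dθ. Then, with V₁(u) := V(√u)/√u for u > 0, one has F(r) = (1/2)∫₀^{r²} V₁(u)(r² - u)^{-1/2} du = Γ(1/2)·(J^{1/2} V₁)(r²)/2, where J^{1/2} is the Riemann–Liouville fractional integral of order 1/2. Consequently, the function F on (0,∞) determines V uniquely among even continuous functions. -/
import Mathlib

open scoped Real

open Real intervalIntegral MeasureTheory Finset in
private lemma wallis_prod' (n : ℕ) :
    (∫ x in (0:ℝ)..(π/2), sin x ^ (n+1)) * (∫ x in (0:ℝ)..(π/2), sin x ^ n)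
      = π / (2*(n+1)) := by
  induction n with
  | zero => simp [integral_sin]
  | succ k ih =>
    have hrec : (∫ x in (0:ℝ)..(π/2), sin x ^ (k+2))
        = ((k:ℝ)+1)/((k:ℝ)+2) * ∫ x in (0:ℝ)..(π/2), sin x ^ k := by
      rw [integral_sin_pow]; simp
    have hne : ((k:ℝ)+1) ≠ 0 := by positivity
    have hne2 : ((k:ℝ)+2) ≠ 0 := by positivity
    calc (∫ x in (0:ℝ)..(π/2), sin x ^ (k+1+1)) * ∫ x in (0:ℝ)..(π/2), sin x ^ (k+1)
        = ((k:ℝ)+1)/((k:ℝ)+2) *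
            ((∫ x in (0:ℝ)..(π/2), sin x ^ (k+1)) * ∫ x in (0:ℝ)..(π/2), sin x ^ k) := by
          rw [show k+1+1 = k+2 from rfl, hrec]; ring
      _ = ((k:ℝ)+1)/((k:ℝ)+2) * (π / (2*((k:ℝ)+1))) := by rw [ih]
      _ = π / (2*((k:ℝ)+1+1)) := by field_simp; ring
      _ = π / (2*(((k+1:ℕ):ℝ)+1)) := by push_cast; ring

open Real intervalIntegral MeasureTheory Finset in
private lemma cos_pow_integral' (n : ℕ) :
    (∫ x in (0:ℝ)..(π/2), cos x ^ n) = ∫ x in (0:ℝ)..(π/2), sin x ^ n := by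
  have h := intervalIntegral.integral_comp_sub_left (a := 0) (b := π/2)
    (fun x => sin x ^ n) (π/2)
  simp only [sub_zero, sub_self] at h
  rw [← h]
  congr 1; ext x
  rw [Real.sin_pi_div_two_sub]

open Real intervalIntegral MeasureTheory Finset in
private lemma key_poly' (p : Polynomial ℝ) :
    (∫ φ in (0:ℝ)..(π/2), sin φ * ∫ θ in (0:ℝ)..(π/2), p.eval (sin φ * cos θ))
      = (π/2) * ∫ x in (0:ℝ)..1, p.eval x := by
  set N := p.natDegree + 1 with hN
  have hev : ∀ x : ℝ, p.eval x = ∑ i ∈ range N, p.coeff i * x ^ i := fun x => by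
    rw [hN]; exact p.eval_eq_sum_range x
  have hI : ∀ (i : ℕ) (φ : ℝ), (∫ θ in (0:ℝ)..(π/2), (sin φ * cos θ)^i)
      = sin φ ^ i * ∫ θ in (0:ℝ)..(π/2), cos θ ^ i := by
    intro i φ
    rw [← intervalIntegral.integral_const_mul]
    congr 1; ext θ; rw [mul_pow]
  have lhs_eq : (∫ φ in (0:ℝ)..(π/2), sin φ * ∫ θ in (0:ℝ)..(π/2), p.eval (sin φ * cos θ))
      = ∑ i ∈ range N, p.coeff i * ((∫ x in (0:ℝ)..(π/2), sin x ^ (i+1)) *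
          ∫ x in (0:ℝ)..(π/2), sin x ^ i) := by
    have step1 : ∀ φ : ℝ, sin φ * (∫ θ in (0:ℝ)..(π/2), p.eval (sin φ * cos θ))
        = ∑ i ∈ range N, p.coeff i * (∫ x in (0:ℝ)..(π/2), sin x ^ i) * sin φ ^ (i+1) := by
      intro φ
      have : (∫ θ in (0:ℝ)..(π/2), p.eval (sin φ * cos θ))
          = ∑ i ∈ range N, p.coeff i * (sin φ ^ i * ∫ θ in (0:ℝ)..(π/2), cos θ ^ i) := by
        simp only [hev]
        rw [intervalIntegral.integral_finset_sum]
        · refine Finset.sum_congr rfl fun i _ => ?_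
          rw [intervalIntegral.integral_const_mul, hI]
        · intro i _
          exact (Continuous.intervalIntegrable (by fun_prop) _ _)
      rw [this, Finset.mul_sum]
      refine Finset.sum_congr rfl fun i _ => ?_
      rw [cos_pow_integral']
      ring
    rw [intervalIntegral.integral_congr (g := fun φ => ∑ i ∈ range N,
        p.coeff i * (∫ x in (0:ℝ)..(π/2), sin x ^ i) * sin φ ^ (i+1))
        (fun φ _ => step1 φ)]
    rw [intervalIntegral.integral_finset_sum (fun i _ =>
      (Continuous.intervalIntegrable (by fun_prop) _ _))]
    refine Finset.sum_congr rfl fun i _ => ?_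
    rw [intervalIntegral.integral_const_mul]
    ring
  rw [lhs_eq]
  have rhs_eq : (∫ x in (0:ℝ)..1, p.eval x) = ∑ i ∈ range N, p.coeff i * (1/(i+1)) := by
    simp only [hev]
    rw [intervalIntegral.integral_finset_sum (fun i _ =>
      (Continuous.intervalIntegrable (by fun_prop) _ _))]
    refine Finset.sum_congr rfl fun i _ => ?_
    rw [intervalIntegral.integral_const_mul, integral_pow]
    simp
  rw [rhs_eq, Finset.mul_sum]
  refine Finset.sum_congr rfl fun i _ => ?_
  rw [wallis_prod']
  field_simp

open Real intervalIntegral MeasureTheory in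
private lemma arg_mem_Icc' {φ θ : ℝ} (hφ : φ ∈ Set.uIoc 0 (π/2)) (hθ : θ ∈ Set.uIoc 0 (π/2)) :
    sin φ * cos θ ∈ Set.Icc (0:ℝ) 1 := by
  rw [Set.uIoc_of_le (le_of_lt pi_div_two_pos)] at hφ hθ
  have h1 : 0 ≤ sin φ := sin_nonneg_of_nonneg_of_le_pi hφ.1.le
    (hφ.2.trans (by linarith [pi_pos]))
  have h2 : 0 ≤ cos θ := cos_nonneg_of_mem_Icc ⟨by linarith [hθ.1, pi_div_two_pos], hθ.2⟩
  constructor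
  · positivity
  · nlinarith [sin_le_one φ, cos_le_one θ]

open Real intervalIntegral MeasureTheory in
private lemma inner_continuous' (f : ℝ → ℝ) (hf : Continuous f) :
    Continuous fun φ => ∫ θ in (0:ℝ)..(π/2), f (sin φ * cos θ) := by
  apply continuous_parametric_intervalIntegral_of_continuous'
    (f := fun φ θ => f (sin φ * cos θ)) (μ := volume)
  fun_prop

open Real intervalIntegral MeasureTheory in
private lemma key_identity' (f : ℝ → ℝ) (hf : Continuous f) :
    (∫ φ in (0:ℝ)..(π/2), sin φ * ∫ θ in (0:ℝ)..(π/2), f (sin φ * cos θ))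
      = (π/2) * ∫ x in (0:ℝ)..1, f x := by
  set A := ∫ φ in (0:ℝ)..(π/2), sin φ * ∫ θ in (0:ℝ)..(π/2), f (sin φ * cos θ) with hA
  set B := (π/2) * ∫ x in (0:ℝ)..1, f x with hB
  have hC : (0:ℝ) < π/2*(π/2) + π/2 := by positivity
  have key : ∀ ε > (0:ℝ), |A - B| ≤ (π/2*(π/2) + π/2) * ε := by
    intro ε hε
    obtain ⟨p, hp⟩ := exists_polynomial_near_of_continuousOn 0 1 f hf.continuousOn ε hε
    have hfp : ∀ x ∈ Set.Icc (0:ℝ) 1, |f x - p.eval x| ≤ ε := fun x hx => by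
      rw [abs_sub_comm]; exact (hp x hx).le
    have int_f : IntervalIntegrable
        (fun φ => sin φ * ∫ θ in (0:ℝ)..(π/2), f (sin φ * cos θ)) volume 0 (π/2) :=
      (continuous_sin.mul (inner_continuous' f hf)).intervalIntegrable _ _
    have int_p : IntervalIntegrable
        (fun φ => sin φ * ∫ θ in (0:ℝ)..(π/2), p.eval (sin φ * cos θ)) volume 0 (π/2) :=
      (continuous_sin.mul (inner_continuous' _ (Polynomial.continuous p))).intervalIntegrable _ _
    have h1 : |A - ∫ φ in (0:ℝ)..(π/2), sin φ * ∫ θ in (0:ℝ)..(π/2), p.eval (sin φ * cos θ)|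
        ≤ (ε * (π/2)) * (π/2) := by
      rw [hA, ← intervalIntegral.integral_sub int_f int_p]
      have := intervalIntegral.norm_integral_le_of_norm_le_const
        (a := 0) (b := π/2) (C := ε * (π/2))
        (f := fun φ => sin φ * (∫ θ in (0:ℝ)..(π/2), f (sin φ * cos θ))
          - sin φ * ∫ θ in (0:ℝ)..(π/2), p.eval (sin φ * cos θ)) ?_
      · rw [Real.norm_eq_abs] at this
        calc _ ≤ ε * (π/2) * |π/2 - 0| := this
          _ = ε * (π/2) * (π/2) := by rw [sub_zero, abs_of_pos pi_div_two_pos]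
      · intro φ hφ
        simp only [← mul_sub, Real.norm_eq_abs, abs_mul]
        have hsub : (∫ θ in (0:ℝ)..(π/2), f (sin φ * cos θ))
            - ∫ θ in (0:ℝ)..(π/2), p.eval (sin φ * cos θ)
            = ∫ θ in (0:ℝ)..(π/2), (f (sin φ * cos θ) - p.eval (sin φ * cos θ)) := by
          rw [intervalIntegral.integral_sub
            ((show Continuous fun θ => f (sin φ * cos θ) by fun_prop).intervalIntegrable _ _)
            ((show Continuous fun θ => Polynomial.eval (sin φ * cos θ) p by
              fun_prop).intervalIntegrable _ _)]
        rw [hsub]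
        have hbound := intervalIntegral.norm_integral_le_of_norm_le_const
          (a := 0) (b := π/2) (C := ε)
          (f := fun θ => f (sin φ * cos θ) - p.eval (sin φ * cos θ))
          (fun θ hθ => by
            rw [Real.norm_eq_abs]
            exact hfp _ (arg_mem_Icc' hφ hθ))
        rw [Real.norm_eq_abs, sub_zero, abs_of_pos pi_div_two_pos] at hbound
        calc |sin φ| * |∫ θ in (0:ℝ)..(π/2), (f (sin φ * cos θ) - p.eval (sin φ * cos θ))|
            ≤ 1 * (ε * (π/2)) := by
              apply mul_le_mul (abs_sin_le_one φ) hbound (abs_nonneg _) zero_le_one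
          _ = ε * (π/2) := by ring
    have h3 : |(∫ x in (0:ℝ)..1, p.eval x) - ∫ x in (0:ℝ)..1, f x| ≤ ε := by
      rw [← intervalIntegral.integral_sub ((Polynomial.continuous p).intervalIntegrable _ _)
        (hf.intervalIntegrable _ _)]
      have := intervalIntegral.norm_integral_le_of_norm_le_const
        (a := 0) (b := 1) (C := ε)
        (f := fun x => p.eval x - f x)
        (fun x hx => by
          rw [Real.norm_eq_abs, ← abs_sub_comm]
          refine hfp _ ?_
          rw [Set.uIoc_of_le zero_le_one] at hx
          exact ⟨hx.1.le, hx.2⟩)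
      simpa using this
    have h2 := key_poly' p
    calc |A - B| ≤ |A - ∫ φ in (0:ℝ)..(π/2), sin φ *
          ∫ θ in (0:ℝ)..(π/2), p.eval (sin φ * cos θ)|
          + |(∫ φ in (0:ℝ)..(π/2), sin φ *
          ∫ θ in (0:ℝ)..(π/2), p.eval (sin φ * cos θ)) - B| := abs_sub_le _ _ _
      _ ≤ (ε * (π/2)) * (π/2) + (π/2) * ε := by
          refine add_le_add h1 ?_
          rw [h2, hB, ← mul_sub, abs_mul, abs_of_pos pi_div_two_pos]
          exact mul_le_mul_of_nonneg_left h3 (le_of_lt pi_div_two_pos)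
      _ = (π/2*(π/2) + π/2) * ε := by ring
  have habs : |A - B| ≤ 0 := by
    refine le_of_forall_pos_le_add fun δ hδ => ?_
    have := key (δ / (π/2*(π/2) + π/2)) (by positivity)
    rw [mul_div_cancel₀ _ (ne_of_gt hC)] at this
    linarith
  have : A - B = 0 := abs_nonpos_iff.mp habs
  linarith

open Real intervalIntegral MeasureTheory in
private lemma half_integral' (V : ℝ → ℝ) (r : ℝ) (hr : 0 < r) :
    (∫ u in (0:ℝ)..(r^2), (V (Real.sqrt u) / Real.sqrt u) * (r^2 - u) ^ (-(1/2):ℝ))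
      = 2 * ∫ θ in (0:ℝ)..(π/2), V (r * cos θ) := by
  set g : ℝ → ℝ := fun u => (V (Real.sqrt u) / Real.sqrt u) * (r^2 - u) ^ (-(1/2):ℝ) with hg
  set f : ℝ → ℝ := fun θ => r^2 * cos θ ^ 2 with hf
  have hderiv : ∀ θ ∈ Set.Ioo (0:ℝ) (π/2),
      HasDerivWithinAt f (r^2 * ((2:ℕ) * cos θ ^ 1 * (-sin θ))) (Set.Ioo (0:ℝ) (π/2)) θ := by
    intro θ _
    exact (((hasDerivAt_cos θ).pow 2).const_mul (r^2)).hasDerivWithinAt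
  have hinj : Set.InjOn f (Set.Ioo (0:ℝ) (π/2)) := by
    have : StrictAntiOn f (Set.Ioo (0:ℝ) (π/2)) := by
      intro a ha b hb hab
      have hca : 0 < cos a := cos_pos_of_mem_Ioo ⟨by linarith [ha.1, pi_div_two_pos], ha.2⟩
      have hcb : 0 < cos b := cos_pos_of_mem_Ioo ⟨by linarith [hb.1, pi_div_two_pos], hb.2⟩
      have : cos b < cos a := strictAntiOn_cos
        ⟨ha.1.le, by linarith [ha.2, pi_pos]⟩ ⟨hb.1.le, by linarith [hb.2, pi_pos]⟩ hab
      simp only [hf]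
      have hr2 : 0 < r^2 := by positivity
      nlinarith [mul_pos hr2 (mul_pos (sub_pos.mpr this) (show (0:ℝ) < cos a + cos b by linarith))]
    exact this.injOn
  have himg : f '' Set.Ioo (0:ℝ) (π/2) = Set.Ioo 0 (r^2) := by
    ext u
    simp only [Set.mem_image, Set.mem_Ioo]
    constructor
    · rintro ⟨θ, ⟨h0, h2⟩, rfl⟩
      have hc : 0 < cos θ := cos_pos_of_mem_Ioo ⟨by linarith [pi_div_two_pos], h2⟩
      have hc1 : cos θ < 1 := by
        have := strictAntiOn_cos (Set.left_mem_Icc.mpr pi_pos.le)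
          ⟨h0.le, by linarith [pi_pos]⟩ h0
        simpa using this
      constructor
      · simp only [hf]; positivity
      · simp only [hf]
        have hr2 : 0 < r^2 := by positivity
        nlinarith [mul_pos hr2 (show (0:ℝ) < 1 - cos θ^2 by nlinarith)]
    · rintro ⟨hu0, hur⟩
      have hsu : 0 < Real.sqrt u := Real.sqrt_pos.mpr hu0
      have hsu1 : Real.sqrt u < r := by
        have := Real.sqrt_lt_sqrt hu0.le hur
        rwa [Real.sqrt_sq hr.le] at this
      refine ⟨Real.arccos (Real.sqrt u / r), ⟨?_, ?_⟩, ?_⟩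
      · exact Real.arccos_pos.mpr (by rw [div_lt_one hr]; exact hsu1)
      · exact Real.arccos_lt_pi_div_two.mpr (div_pos hsu hr)
      · simp only [hf]
        rw [Real.cos_arccos (by have := div_pos hsu hr; linarith)
          (by rw [div_le_one hr]; exact hsu1.le)]
        rw [div_pow, Real.sq_sqrt hu0.le]
        field_simp
  have hchange := integral_image_eq_integral_abs_deriv_smul measurableSet_Ioo hderiv hinj g
  rw [himg] at hchange
  have heq : Set.EqOn (fun θ => |r^2 * ((2:ℕ) * cos θ ^ 1 * (-sin θ))| • g (f θ))
      (fun θ => 2 * V (r * cos θ)) (Set.Ioo (0:ℝ) (π/2)) := by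
    intro θ hθ
    have hc : 0 < cos θ := cos_pos_of_mem_Ioo ⟨by linarith [hθ.1, pi_div_two_pos], hθ.2⟩
    have hs : 0 < sin θ := sin_pos_of_pos_of_lt_pi hθ.1 (by linarith [hθ.2, pi_pos])
    have habs : |r^2 * ((2:ℕ) * cos θ ^ 1 * (-sin θ))| = 2 * r^2 * cos θ * sin θ := by
      have h2 : r^2 * ((2:ℕ) * cos θ ^ 1 * (-sin θ)) = -(2*r^2*cos θ*sin θ) := by
        push_cast; ring
      rw [h2, abs_neg, abs_of_nonneg (by positivity)]
    have hsq : Real.sqrt (f θ) = r * cos θ := by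
      simp only [hf]
      rw [show r^2 * cos θ^2 = (r * cos θ)^2 by ring, Real.sqrt_sq (by positivity)]
    have hsubx : r^2 - f θ = (r * sin θ)^2 := by
      simp only [hf]
      linear_combination (-(r^2)) * sin_sq_add_cos_sq θ
    have hrpow : ((r * sin θ)^2 : ℝ) ^ (-(1/2):ℝ) = (r * sin θ)⁻¹ := by
      rw [Real.rpow_neg (sq_nonneg _), ← Real.sqrt_eq_rpow, Real.sqrt_sq (by positivity)]
    simp only [hg, smul_eq_mul, habs, hsq, hsubx, hrpow]
    field_simp
  rw [MeasureTheory.setIntegral_congr_fun measurableSet_Ioo heq] at hchange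
  rw [intervalIntegral.integral_of_le (by positivity : (0:ℝ) ≤ r^2),
    MeasureTheory.integral_Ioc_eq_integral_Ioo, hchange,
    ← MeasureTheory.integral_Ioc_eq_integral_Ioo,
    ← intervalIntegral.integral_of_le pi_div_two_pos.le,
    intervalIntegral.integral_const_mul]

/-- The Riemann–Liouville fractional integral of order 1/2:
`(J^{1/2} g)(t) = (1/Γ(1/2)) ∫₀^t g(u) (t-u)^{-1/2} du`. -/
noncomputable def Jhalf (g : ℝ → ℝ) (t : ℝ) : ℝ :=
  (1 / Real.Gamma (1 / 2)) * ∫ u in (0:ℝ)..t, g u * (t - u) ^ (-(1/2) : ℝ)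

open Real MeasureTheory intervalIntegral in
/-- For even continuous `V`, the function `F(r) = ∫₀^{π/2} V(r cos θ) dθ` equals
`(1/2)∫₀^{r²} V₁(u)(r²-u)^{-1/2} du = Γ(1/2)(J^{1/2}V₁)(r²)/2` with
`V₁(u) = V(√u)/√u`, and `F` on `(0,∞)` determines `V` uniquely among even
continuous functions. -/
theorem even_potential_determined_by_angular_average (V : ℝ → ℝ)
    (hV : Continuous V) (hVeven : ∀ x, V (-x) = V x) :
    (∀ r > (0:ℝ),
      (∫ θ in (0:ℝ)..(Real.pi / 2), V (r * Real.cos θ)) =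
        (1 / 2) * ∫ u in (0:ℝ)..(r ^ 2),
          (V (Real.sqrt u) / Real.sqrt u) * (r ^ 2 - u) ^ (-(1/2) : ℝ) ∧
      (∫ θ in (0:ℝ)..(Real.pi / 2), V (r * Real.cos θ)) =
        Real.Gamma (1 / 2) * Jhalf (fun u => V (Real.sqrt u) / Real.sqrt u) (r ^ 2) / 2) ∧
    (∀ W : ℝ → ℝ, Continuous W → (∀ x, W (-x) = W x) →
      (∀ r > (0:ℝ),
        (∫ θ in (0:ℝ)..(Real.pi / 2), V (r * Real.cos θ)) =
          ∫ θ in (0:ℝ)..(Real.pi / 2), W (r * Real.cos θ)) →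
      V = W) := by
  have hΓ : Real.Gamma (1/2) ≠ 0 := by
    rw [Real.Gamma_one_half_eq]
    exact ne_of_gt (Real.sqrt_pos.mpr Real.pi_pos)
  constructor
  · intro r hr
    have h := half_integral' V r hr
    constructor
    · rw [h]; ring
    · simp only [Jhalf]
      rw [show (∫ u in (0:ℝ)..(r^2), (fun u => V (Real.sqrt u) / Real.sqrt u) u *
          (r^2 - u) ^ (-(1/2):ℝ)) = ∫ u in (0:ℝ)..(r^2),
          (V (Real.sqrt u) / Real.sqrt u) * (r^2 - u) ^ (-(1/2):ℝ) from rfl, h]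
      field_simp
  · intro W hW hWeven hFeq
    set D : ℝ → ℝ := fun x => V x - W x with hD
    have hDc : Continuous D := hV.sub hW
    have hDeven : ∀ y, D (-y) = D y := fun y => by
      simp only [hD]; rw [hVeven, hWeven]
    have hF0 : ∀ r, 0 < r → (∫ θ in (0:ℝ)..(π/2), D (r * Real.cos θ)) = 0 := by
      intro r hr
      have hi1 : IntervalIntegrable (fun θ => V (r * Real.cos θ)) volume 0 (π/2) :=
        Continuous.intervalIntegrable (by fun_prop) _ _
      have hi2 : IntervalIntegrable (fun θ => W (r * Real.cos θ)) volume 0 (π/2) :=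
        Continuous.intervalIntegrable (by fun_prop) _ _
      simp only [hD]
      rw [intervalIntegral.integral_sub hi1 hi2, hFeq r hr, sub_self]
    have hInt : ∀ R, 0 < R → (∫ x in (0:ℝ)..R, D x) = 0 := by
      intro R hR
      have hkey := key_identity' (fun x => D (R * x)) (by fun_prop)
      have hzero : (∫ φ in (0:ℝ)..(π/2),
          Real.sin φ * ∫ θ in (0:ℝ)..(π/2), D (R * (Real.sin φ * Real.cos θ))) = 0 := by
        rw [intervalIntegral.integral_congr (g := fun _ => (0:ℝ)) ?_]
        · simp
        · intro φ hφ
          rw [Set.uIcc_of_le pi_div_two_pos.le] at hφ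
          rcases eq_or_lt_of_le hφ.1 with h | h
          · simp [← h]
          · have hsin : 0 < Real.sin φ :=
              Real.sin_pos_of_pos_of_lt_pi h (by linarith [hφ.2, Real.pi_pos])
            have h0 := hF0 (R * Real.sin φ) (by positivity)
            have : (∫ θ in (0:ℝ)..(π/2), D (R * (Real.sin φ * Real.cos θ)))
                = ∫ θ in (0:ℝ)..(π/2), D ((R * Real.sin φ) * Real.cos θ) := by
              congr 1; ext θ; ring_nf
            show Real.sin φ * (∫ θ in (0:ℝ)..(π/2), D (R * (Real.sin φ * Real.cos θ))) = 0
            rw [this, h0, mul_zero]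
      rw [hzero] at hkey
      have h1 : (∫ x in (0:ℝ)..1, D (R * x)) = 0 :=
        (mul_eq_zero.mp hkey.symm).resolve_left (ne_of_gt pi_div_two_pos)
      have h2 := intervalIntegral.smul_integral_comp_mul_left (a := (0:ℝ)) (b := 1) D R
      rw [h1, smul_zero, mul_zero, mul_one] at h2
      exact h2.symm
    have hDpos : ∀ x, 0 < x → D x = 0 := by
      intro x hx
      have hderiv1 : HasDerivAt (fun y => ∫ t in (0:ℝ)..y, D t) (D x) x :=
        intervalIntegral.integral_hasDerivAt_right (hDc.intervalIntegrable _ _)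
          (hDc.stronglyMeasurableAtFilter _ _) hDc.continuousAt
      have hev : (fun y => ∫ t in (0:ℝ)..y, D t) =ᶠ[nhds x] fun _ => (0:ℝ) := by
        filter_upwards [isOpen_Ioi.mem_nhds hx] with y hy using hInt y hy
      have hderiv0 : HasDerivAt (fun y => ∫ t in (0:ℝ)..y, D t) 0 x :=
        (hasDerivAt_const x (0:ℝ)).congr_of_eventuallyEq hev
      exact hderiv1.unique hderiv0
    have hDzero : ∀ x, D x = 0 := by
      have h0 : D 0 = 0 := by
        have h1 : Filter.Tendsto D (nhdsWithin 0 (Set.Ioi 0)) (nhds (D 0)) :=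
          hDc.continuousWithinAt
        have h2 : Filter.Tendsto D (nhdsWithin 0 (Set.Ioi 0)) (nhds 0) := by
          refine Filter.Tendsto.congr' ?_ tendsto_const_nhds
          filter_upwards [self_mem_nhdsWithin] with y hy
          exact (hDpos y hy).symm
        exact tendsto_nhds_unique h1 h2
      intro x
      rcases lt_trichotomy x 0 with h | h | h
      · have := hDeven (-x)
        rw [neg_neg] at this
        rw [this]
        exact hDpos (-x) (by linarith)
      · rw [h]; exact h0
      · exact hDpos x h
    funext x
    have := hDzero x
    simp only [hD] at this
    linarith
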